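/- arXiv:1507.06154 — 2 statements merged into one kernel-verified Lean document; each statement's English description precedes it below -/
import Mathlib

section
/- Let B_{k,ℓ} denote the number of up-down words of length ℓ over {1,…,k} avoiding the consecutive pattern 312. Then for all k ≥ 2 and i ≥ 2, B_{k,2i} = Σ_{j=2}^{k} B_{j,2i−1}. -/
/-- `w` is an up-down word: `w₀ < w₁ > w₂ < w₃ > ⋯` (0-indexed). -/
def IsUpDown {l k : ℕ} (w : Fin l → Fin k) : Prop :=
  ∀ j : ℕ, ∀ h : j + 1 < l,
    (j % 2 = 0 → w ⟨j, by omega⟩ < w ⟨j + 1, h⟩) ∧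
    (j % 2 = 1 → w ⟨j + 1, h⟩ < w ⟨j, by omega⟩)

/-- `w` avoids the consecutive pattern 312. -/
def AvoidsC312 {l k : ℕ} (w : Fin l → Fin k) : Prop :=
  ∀ j : ℕ, ∀ h : j + 2 < l,
    ¬ (w ⟨j + 1, by omega⟩ < w ⟨j + 2, h⟩ ∧ w ⟨j + 2, h⟩ < w ⟨j, by omega⟩)

/-- The number of up-down words of length `l` over `{1,…,k}` avoiding the
consecutive pattern 312. -/
noncomputable def Bcount (k l : ℕ) : ℕ :=
  {w : Fin l → Fin k | IsUpDown w ∧ AvoidsC312 w}.ncard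

/- ------------------ auxiliary machinery ------------------ -/

open Classical in
/-- Finset version of the counted set. -/
noncomputable def Bfin (k l : ℕ) : Finset (Fin l → Fin k) :=
  Finset.univ.filter (fun w => IsUpDown w ∧ AvoidsC312 w)

lemma mem_Bfin {k l : ℕ} {w : Fin l → Fin k} :
    w ∈ Bfin k l ↔ IsUpDown w ∧ AvoidsC312 w := by
  classical
  simp [Bfin]

lemma Bcount_eq (k l : ℕ) : Bcount k l = (Bfin k l).card := by
  classical
  rw [Bcount, show {w : Fin l → Fin k | IsUpDown w ∧ AvoidsC312 w} = ↑(Bfin k l) by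
    ext w; simp [mem_Bfin]]
  exact Set.ncard_coe_finset _

lemma wcongr {l k : ℕ} (w : Fin l → Fin k) {a b : ℕ} (ha : a < l) (hb : b < l)
    (h : a = b) : w ⟨a, ha⟩ = w ⟨b, hb⟩ := by subst h; rfl

/-- Peaks of an up-down 312-avoiding word are weakly increasing; every peak is
at most the last peak. -/
lemma peaks_le {l k n : ℕ} {w : Fin l → Fin k} (hud : IsUpDown w)
    (hav : AvoidsC312 w) (hl : l = 2 * n + 3) :
    ∀ d s (hs : 2 * s + 1 < l), s + d = n →
      w ⟨2 * s + 1, hs⟩ ≤ w ⟨2 * n + 1, by omega⟩ := by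
  intro d
  induction d with
  | zero =>
    intro s hs hsn
    have : s = n := by omega
    subst this; exact le_refl _
  | succ d ih =>
    intro s hs hsn
    have p1 : 2 * s + 2 < l := by omega
    have p2 : 2 * s + 3 < l := by omega
    have h2 : w ⟨2 * s + 2, p1⟩ < w ⟨2 * s + 3, p2⟩ :=
      (hud (2 * s + 2) (by omega)).1 (by omega)
    have h3 : ¬ (w ⟨2 * s + 2, p1⟩ < w ⟨2 * s + 3, p2⟩ ∧
        w ⟨2 * s + 3, p2⟩ < w ⟨2 * s + 1, hs⟩) := hav (2 * s + 1) (by omega)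
    have h4 : w ⟨2 * s + 1, hs⟩ ≤ w ⟨2 * s + 3, p2⟩ := by
      by_contra hc
      push_neg at hc
      exact h3 ⟨h2, hc⟩
    have h5 : w ⟨2 * (s + 1) + 1, by omega⟩ ≤ w ⟨2 * n + 1, by omega⟩ :=
      ih (s + 1) (by omega) (by omega)
    exact le_trans h4 h5
  
/-- In an up-down 312-avoiding word of odd length `2n+3`, the last peak
(position `2n+1`) is the maximum letter. -/
lemma max_le_peak {l k n : ℕ} {w : Fin l → Fin k} (hud : IsUpDown w)
    (hav : AvoidsC312 w) (hl : l = 2 * n + 3) :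
    ∀ t : Fin l, w t ≤ w ⟨2 * n + 1, by omega⟩ := by
  rintro ⟨t, ht⟩
  rcases Nat.even_or_odd t with he | ho
  · obtain ⟨s, hs⟩ := he
    rcases Nat.eq_zero_or_pos s with h0 | hpos
    · -- t = 0
      have h1 : w ⟨0, by omega⟩ < w ⟨2 * 0 + 1, by omega⟩ := (hud 0 (by omega)).1 rfl
      have h2 : w ⟨t, ht⟩ = w ⟨0, by omega⟩ := wcongr w _ _ (by omega)
      calc w ⟨t, ht⟩ = w ⟨0, by omega⟩ := h2
        _ ≤ w ⟨2 * 0 + 1, by omega⟩ := h1.le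
        _ ≤ w ⟨2 * n + 1, by omega⟩ := peaks_le hud hav hl n 0 (by omega) (by omega)
    · -- t = 2(s'+1) for s' = s - 1
      obtain ⟨s', rfl⟩ : ∃ s', s = s' + 1 := ⟨s - 1, by omega⟩
      have hp : 2 * s' + 1 < l := by omega
      have h1 : w ⟨2 * s' + 2, by omega⟩ < w ⟨2 * s' + 1, hp⟩ :=
        (hud (2 * s' + 1) (by omega)).2 (by omega)
      have h2 : w ⟨t, ht⟩ = w ⟨2 * s' + 2, by omega⟩ := wcongr w _ _ (by omega)
      calc w ⟨t, ht⟩ = w ⟨2 * s' + 2, by omega⟩ := h2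
        _ ≤ w ⟨2 * s' + 1, hp⟩ := h1.le
        _ ≤ w ⟨2 * n + 1, by omega⟩ := peaks_le hud hav hl (n - s') s' hp (by omega)
  · obtain ⟨s, hs⟩ := ho
    have hp : 2 * s + 1 < l := by omega
    have h2 : w ⟨t, ht⟩ = w ⟨2 * s + 1, hp⟩ := wcongr w _ _ (by omega)
    calc w ⟨t, ht⟩ = w ⟨2 * s + 1, hp⟩ := h2
      _ ≤ w ⟨2 * n + 1, by omega⟩ := peaks_le hud hav hl (n - s) s hp (by omega)

/- ------------------ truncation and extension ------------------ -/

/-- Truncation: drop the last letter. -/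
def truncw {k : ℕ} (n : ℕ) (u : Fin (2 * n + 4) → Fin k) : Fin (2 * n + 3) → Fin k :=
  fun t => u ⟨t.1, by omega⟩

/-- Extension: append a last letter. -/
def extw {k : ℕ} (n : ℕ) (w : Fin (2 * n + 3) → Fin k) (x : Fin k) :
    Fin (2 * n + 4) → Fin k :=
  fun t => if h : t.1 < 2 * n + 3 then w ⟨t.1, h⟩ else x

lemma extw_lt {k : ℕ} (n : ℕ) (w : Fin (2 * n + 3) → Fin k) (x : Fin k)
    (a : ℕ) (ha : a < 2 * n + 3) (ha' : a < 2 * n + 4) :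
    extw n w x ⟨a, ha'⟩ = w ⟨a, ha⟩ := dif_pos ha

lemma extw_last {k : ℕ} (n : ℕ) (w : Fin (2 * n + 3) → Fin k) (x : Fin k)
    (a : ℕ) (ha' : a < 2 * n + 4) (ha : ¬ (a < 2 * n + 3)) :
    extw n w x ⟨a, ha'⟩ = x := dif_neg ha

lemma trunc_good {k n : ℕ} {u : Fin (2 * n + 4) → Fin k}
    (hud : IsUpDown u) (hav : AvoidsC312 u) :
    IsUpDown (truncw n u) ∧ AvoidsC312 (truncw n u) := by
  constructor
  · intro j hj
    exact hud j (by omega)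
  · intro j hj
    exact hav j (by omega)

lemma ext_good {k n : ℕ} {w : Fin (2 * n + 3) → Fin k} {x : Fin k}
    (hud : IsUpDown w) (hav : AvoidsC312 w)
    (hx : w ⟨2 * n + 1, by omega⟩ ≤ x) :
    IsUpDown (extw n w x) ∧ AvoidsC312 (extw n w x) := by
  constructor
  · intro j hj
    by_cases hc : j + 1 < 2 * n + 3
    · constructor
      · intro hpar
        calc extw n w x ⟨j, by omega⟩ = w ⟨j, by omega⟩ := extw_lt n w x j (by omega) _
          _ < w ⟨j + 1, hc⟩ := (hud j hc).1 hpar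
          _ = extw n w x ⟨j + 1, hj⟩ := (extw_lt n w x (j+1) hc _).symm
      · intro hpar
        calc extw n w x ⟨j + 1, hj⟩ = w ⟨j + 1, hc⟩ := extw_lt n w x (j+1) hc _
          _ < w ⟨j, by omega⟩ := (hud j hc).2 hpar
          _ = extw n w x ⟨j, by omega⟩ := (extw_lt n w x j (by omega) _).symm
    · -- j = 2n + 2
      obtain rfl : j = 2 * n + 2 := by omega
      constructor
      · intro _
        have h1 : w ⟨2 * n + 2, by omega⟩ < w ⟨2 * n + 1, by omega⟩ :=
          (hud (2 * n + 1) (by omega)).2 (by omega)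
        calc extw n w x ⟨2 * n + 2, by omega⟩ = w ⟨2 * n + 2, by omega⟩ :=
              extw_lt n w x _ (by omega) _
          _ < w ⟨2 * n + 1, by omega⟩ := h1
          _ ≤ x := hx
          _ = extw n w x ⟨2 * n + 2 + 1, hj⟩ := (extw_last n w x _ _ (by omega)).symm
      · intro hpar
        exfalso; omega
  · intro j hj
    by_cases hc : j + 2 < 2 * n + 3
    · have e0 : extw n w x ⟨j, by omega⟩ = w ⟨j, by omega⟩ :=
        extw_lt n w x j (by omega) _
      have e1 : extw n w x ⟨j + 1, by omega⟩ = w ⟨j + 1, by omega⟩ :=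
        extw_lt n w x (j+1) (by omega) _
      have e2 : extw n w x ⟨j + 2, hj⟩ = w ⟨j + 2, hc⟩ :=
        extw_lt n w x (j+2) hc _
      rintro ⟨hA, hB⟩
      exact hav j hc ⟨e1.symm.trans_lt (hA.trans_eq e2),
        e2.symm.trans_lt (hB.trans_eq e0)⟩
    · -- j = 2n + 1
      obtain rfl : j = 2 * n + 1 := by omega
      rintro ⟨-, hB⟩
      have e2 : extw n w x ⟨2 * n + 1 + 2, hj⟩ = x := extw_last n w x _ _ (by omega)
      have e0 : extw n w x ⟨2 * n + 1, by omega⟩ = w ⟨2 * n + 1, by omega⟩ :=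
        extw_lt n w x _ (by omega) _
      exact absurd (e2.symm.trans_lt (hB.trans_eq e0)) (not_lt.mpr hx)

lemma trunc_ext {k n : ℕ} (w : Fin (2 * n + 3) → Fin k) (x : Fin k) :
    truncw n (extw n w x) = w := by
  funext t
  obtain ⟨tv, htv⟩ := t
  exact extw_lt n w x tv htv _

/- ------------------ the key counting lemma ------------------ -/

lemma fiber_card {k n : ℕ} {w : Fin (2 * n + 3) → Fin k}
    (hw : w ∈ Bfin k (2 * n + 3)) :
    ((Bfin k (2 * n + 4)).filter (fun u => truncw n u = w)).card
      = k - (w ⟨2 * n + 1, by omega⟩).1 := by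
  classical
  rw [mem_Bfin] at hw
  obtain ⟨hud, hav⟩ := hw
  have hcard : ((Bfin k (2 * n + 4)).filter (fun u => truncw n u = w)).card
      = (Finset.univ.filter (fun x : Fin k => w ⟨2 * n + 1, by omega⟩ ≤ x)).card := by
    refine Finset.card_bij' (fun u _ => u ⟨2 * n + 3, by omega⟩)
      (fun x _ => extw n w x) ?hi ?hj ?li ?ri
    case hi =>
      intro u hu
      simp only [Finset.mem_filter] at hu
      obtain ⟨hu, hfu⟩ := hu
      rw [mem_Bfin] at hu
      obtain ⟨hud', hav'⟩ := hu
      simp only [Finset.mem_filter, Finset.mem_univ, true_and]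
      have pa : (2 * n + 1 : ℕ) < 2 * n + 4 := by omega
      have pb : (2 * n + 2 : ℕ) < 2 * n + 4 := by omega
      have pc : (2 * n + 3 : ℕ) < 2 * n + 4 := by omega
      have h3 : ¬ (u ⟨2 * n + 2, pb⟩ < u ⟨2 * n + 3, pc⟩ ∧
          u ⟨2 * n + 3, pc⟩ < u ⟨2 * n + 1, pa⟩) := hav' (2 * n + 1) (by omega)
      have h2 : u ⟨2 * n + 2, pb⟩ < u ⟨2 * n + 3, pc⟩ :=
        (hud' (2 * n + 2) (by omega)).1 (by omega)
      have h4 : u ⟨2 * n + 1, pa⟩ ≤ u ⟨2 * n + 3, pc⟩ := by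
        by_contra hcon
        push_neg at hcon
        exact h3 ⟨h2, hcon⟩
      have e : w ⟨2 * n + 1, by omega⟩ = u ⟨2 * n + 1, pa⟩ :=
        (congrFun hfu ⟨2 * n + 1, by omega⟩).symm
      exact e.trans_le h4
    case hj =>
      intro x hx
      simp only [Finset.mem_filter, Finset.mem_univ, true_and] at hx
      simp only [Finset.mem_filter]
      refine ⟨?_, trunc_ext w x⟩
      rw [mem_Bfin]
      exact ext_good hud hav hx
    case ri =>
      intro x hx
      exact extw_last n w x _ _ (by omega)
    case li =>
      intro u hu
      simp only [Finset.mem_filter] at hu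
      obtain ⟨-, hfu⟩ := hu
      funext t
      obtain ⟨tv, htv⟩ := t
      by_cases ht : tv < 2 * n + 3
      · have e1 : extw n w (u ⟨2 * n + 3, by omega⟩) ⟨tv, htv⟩ = w ⟨tv, ht⟩ :=
          extw_lt n w _ tv ht _
        have e2 : w ⟨tv, ht⟩ = u ⟨tv, htv⟩ := (congrFun hfu ⟨tv, ht⟩).symm
        exact e1.trans e2
      · have e1 : extw n w (u ⟨2 * n + 3, by omega⟩) ⟨tv, htv⟩
            = u ⟨2 * n + 3, by omega⟩ := extw_last n w _ tv htv ht
        exact e1.trans (wcongr u _ _ (by omega))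
  rw [hcard]
  have : (Finset.univ.filter (fun x : Fin k => w ⟨2 * n + 1, by omega⟩ ≤ x))
      = Finset.Ici (w ⟨2 * n + 1, by omega⟩) := by
    ext x; simp
  rw [this, Fin.card_Ici]

lemma LHS_eq (k n : ℕ) :
    (Bfin k (2 * n + 4)).card
      = ∑ w ∈ Bfin k (2 * n + 3),
          (k - (w (⟨2 * n + 1, by omega⟩ : Fin (2 * n + 3))).1) := by
  classical
  have hfmem : ∀ u ∈ Bfin k (2 * n + 4), truncw n u ∈ Bfin k (2 * n + 3) := by
    intro u hu
    rw [mem_Bfin] at hu ⊢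
    exact trunc_good hu.1 hu.2
  rw [Finset.card_eq_sum_card_fiberwise hfmem]
  exact Finset.sum_congr rfl (fun w hw => fiber_card hw)

lemma RHS_eq (k n j : ℕ) (_hj2 : 2 ≤ j) (hjk : j ≤ k) :
    (Bfin j (2 * n + 3)).card
      = ((Bfin k (2 * n + 3)).filter (fun w => ∀ t, (w t).1 < j)).card := by
  classical
  refine Finset.card_bij' (fun v _ => fun t => Fin.castLE hjk (v t))
    (fun (w : Fin (2 * n + 3) → Fin k)
      (hw : w ∈ (Bfin k (2 * n + 3)).filter (fun w => ∀ t, (w t).1 < j)) =>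
        fun t => (⟨(w t).1, (Finset.mem_filter.mp hw).2 t⟩ : Fin j)) ?hi ?hj ?li ?ri
  case hi =>
    intro v hv
    rw [mem_Bfin] at hv
    simp only [Finset.mem_filter]
    refine ⟨?_, fun t => (v t).2⟩
    rw [mem_Bfin]
    exact hv
  case hj =>
    intro v hv
    simp only [Finset.mem_filter] at hv
    have h1 := hv.1
    rw [mem_Bfin] at h1 ⊢
    exact h1
  case li =>
    intro v hv
    funext t
    exact Fin.ext rfl
  case ri =>
    intro v hv
    funext t
    exact Fin.ext rfl

lemma key (k n : ℕ) (_hk : 2 ≤ k) :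
    Bcount k (2 * n + 4) = ∑ j ∈ Finset.Icc 2 k, Bcount j (2 * n + 3) := by
  classical
  rw [Bcount_eq, LHS_eq]
  have hstep : ∀ j ∈ Finset.Icc 2 k,
      Bcount j (2 * n + 3)
        = ((Bfin k (2 * n + 3)).filter (fun w => ∀ t, (w t).1 < j)).card := by
    intro j hj
    simp only [Finset.mem_Icc] at hj
    rw [Bcount_eq]
    exact RHS_eq k n j hj.1 hj.2
  rw [Finset.sum_congr rfl hstep]
  rw [Finset.sum_congr rfl
    (fun j _ => Finset.card_filter (fun w => ∀ t, (w t).1 < j) (Bfin k (2 * n + 3)))]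
  rw [Finset.sum_comm]
  refine Finset.sum_congr rfl fun w hw => ?_
  refine Eq.symm ?_
  rw [mem_Bfin] at hw
  obtain ⟨hud, hav⟩ := hw
  have hmax := max_le_peak hud hav rfl
  have pPeak : (2 * n + 1 : ℕ) < 2 * n + 3 := by omega
  have pp1 : (1 : ℕ) < 2 * n + 3 := by omega
  have h01 : w ⟨0, by omega⟩ < w ⟨1, pp1⟩ := (hud 0 (by omega)).1 rfl
  have h01v : (w ⟨0, by omega⟩).1 < (w ⟨1, pp1⟩).1 := h01
  have h1M : (w ⟨1, pp1⟩).1 ≤ (w ⟨2 * n + 1, pPeak⟩).1 := hmax ⟨1, pp1⟩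
  have hM1 : 1 ≤ (w ⟨2 * n + 1, pPeak⟩).1 := by omega
  have hMk : (w ⟨2 * n + 1, pPeak⟩).1 < k := (w ⟨2 * n + 1, pPeak⟩).2
  have hcond : ∀ j : ℕ, (∀ t, (w t).1 < j) ↔ (w ⟨2 * n + 1, pPeak⟩).1 < j := by
    intro j
    constructor
    · intro h; exact h _
    · intro h t
      have hle : (w t).1 ≤ (w ⟨2 * n + 1, pPeak⟩).1 := hmax t
      omega
  calc ∑ j ∈ Finset.Icc 2 k, (if ∀ t, (w t).1 < j then 1 else 0)
      = ∑ j ∈ Finset.Icc 2 k, (if (w ⟨2 * n + 1, pPeak⟩).1 < j then 1 else 0) := by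
        apply Finset.sum_congr rfl
        intro j _
        simp only [hcond j]
    _ = ((Finset.Icc 2 k).filter (fun j => (w ⟨2 * n + 1, pPeak⟩).1 < j)).card := by
        rw [Finset.card_filter]
    _ = (Finset.Icc ((w ⟨2 * n + 1, pPeak⟩).1 + 1) k).card := by
        congr 1
        ext j
        simp only [Finset.mem_filter, Finset.mem_Icc]
        omega
    _ = k - (w ⟨2 * n + 1, pPeak⟩).1 := by rw [Nat.card_Icc]; omega

/- ------------------ main theorem ------------------ -/

/-- For `k ≥ 2`, `i ≥ 2`: `B_{k,2i} = Σ_{j=2}^{k} B_{j,2i−1}`. -/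
theorem stmt_7 (k i : ℕ) (hk : 2 ≤ k) (hi : 2 ≤ i) :
    Bcount k (2 * i) = ∑ j ∈ Finset.Icc 2 k, Bcount j (2 * i - 1) := by
  have h2 : 2 * i - 1 = 2 * (i - 2) + 3 := by omega
  have h1 : 2 * i = 2 * (i - 2) + 4 := by omega
  rw [h2, h1]
  exact key k (i - 2) hk
end

section
/- For k ≥ 3 and i ≥ 1, the number of 123-avoiding up-down words of length 2i over the alphabet {1,…,k} equals (1/(i+1)) · C(i+k−2, i) · C(i+k−1, i), where C(·,·) denotes binomial coefficients. Equivalently, it is the Narayana number N_{k+i−1, i} = (1/(i+1)) · C(k+i−1, i) · C(k+i−2, i). -/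
lemma card_strictMono (a n : ℕ) :
    Fintype.card {f : Fin a → Fin n // StrictMono f} = n.choose a := by
  have e : {s : Finset (Fin n) // s.card = a} ≃ {f : Fin a → Fin n // StrictMono f} :=
    { toFun := fun s => ⟨s.1.orderEmbOfFin s.2, (s.1.orderEmbOfFin s.2).strictMono⟩
      invFun := fun f => ⟨Finset.univ.image f.1, by
        rw [Finset.card_image_of_injective _ f.2.injective, Finset.card_univ, Fintype.card_fin]⟩
      left_inv := fun s => by
        ext x
        simp only [Finset.mem_image, Finset.mem_univ, true_and]
        constructor
        · rintro ⟨j, rfl⟩; exact Finset.orderEmbOfFin_mem s.1 s.2 j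
        · intro hx
          have := Finset.range_orderEmbOfFin s.1 s.2
          have : x ∈ Set.range (s.1.orderEmbOfFin s.2) := by rw [this]; exact hx
          obtain ⟨j, hj⟩ := this
          exact ⟨j, hj⟩
      right_inv := fun f => by
        apply Subtype.ext
        exact (Finset.orderEmbOfFin_unique _ (fun x => Finset.mem_image_of_mem _ (Finset.mem_univ x)) f.2).symm }
  rw [← Fintype.card_congr e, Fintype.card_finset_len, Fintype.card_fin]

lemma card_strictAnti (a n : ℕ) :
    Fintype.card {f : Fin a → Fin n // StrictAnti f} = n.choose a := by
  rw [← card_strictMono a n]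
  apply Fintype.card_congr
  exact { toFun := fun f => ⟨f.1 ∘ Fin.rev, fun x y hxy => f.2 (by simpa using Fin.rev_lt_rev.mpr hxy)⟩
          invFun := fun f => ⟨f.1 ∘ Fin.rev, fun x y hxy => f.2 (by simpa using Fin.rev_lt_rev.mpr hxy)⟩
          left_inv := fun f => by apply Subtype.ext; funext x; simp
          right_inv := fun f => by apply Subtype.ext; funext x; simp }

lemma strictAnti_gap {i n : ℕ} {x : Fin i → Fin n} (hx : StrictAnti x) :
    ∀ (d a : ℕ) (h : a + d < i), (x ⟨a + d, h⟩ : ℕ) + d ≤ (x ⟨a, by omega⟩ : ℕ) := by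
  intro d
  induction d with
  | zero => intro a h; simp
  | succ d ih =>
    intro a h
    have h1 : a + d < i := by omega
    have h2 := ih a h1
    have h3 : x ⟨a + (d+1), h⟩ < x ⟨a + d, h1⟩ := hx (Fin.mk_lt_mk.2 (by omega))
    have h4 : (x ⟨a + (d+1), h⟩ : ℕ) < (x ⟨a + d, h1⟩ : ℕ) := h3
    omega

lemma strictAnti_add_lt {i n : ℕ} {x : Fin i → Fin n} (hx : StrictAnti x) (j : Fin i) :
    (x j : ℕ) + (j : ℕ) < n := by
  have h0 : (0 : ℕ) + (j : ℕ) < i := by simpa using j.isLt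
  have := strictAnti_gap hx (j : ℕ) 0 h0
  have h2 : x ⟨0 + (j : ℕ), h0⟩ = x j := by congr 1; exact Fin.ext (by simp)
  rw [h2] at this
  have := (x ⟨0, by omega⟩).isLt
  omega

lemma strictAnti_le_apply {i n : ℕ} {x : Fin i → Fin n} (hx : StrictAnti x) (j : Fin i) :
    i - 1 - (j : ℕ) ≤ (x j : ℕ) := by
  have h0 : (j : ℕ) + (i - 1 - (j : ℕ)) < i := by have := j.isLt; omega
  have := strictAnti_gap hx (i - 1 - (j : ℕ)) (j : ℕ) h0
  have h2 : x ⟨(j : ℕ), by omega⟩ = x j := by congr 1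
  rw [h2] at this
  omega

def fwd (i n j0 : ℕ) (hj0 : j0 < i) (x y : Fin i → Fin n) :
    (Fin (i+1) → Fin n) × (Fin (i-1) → Fin n) :=
  (fun u => if h : (u : ℕ) ≤ j0 then x ⟨u, by omega⟩
            else y ⟨(u : ℕ) - 1, by have := u.isLt; omega⟩,
   fun u => if h : (u : ℕ) < j0 then y ⟨u, by omega⟩
            else x ⟨(u : ℕ) + 1, by have := u.isLt; omega⟩)

def bwd (i n j1 : ℕ) (hj1 : j1 ≤ i - 1) (hi : 1 ≤ i) (c : Fin (i+1) → Fin n)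
    (d : Fin (i-1) → Fin n) : (Fin i → Fin n) × (Fin i → Fin n) :=
  (fun u => if h : (u : ℕ) ≤ j1 then c ⟨u, by have := u.isLt; omega⟩
            else d ⟨(u : ℕ) - 1, by have := u.isLt; omega⟩,
   fun u => if h : (u : ℕ) < j1 then d ⟨u, by omega⟩
            else c ⟨(u : ℕ) + 1, by have := u.isLt; omega⟩)

lemma bwd_fwd (i n j0 : ℕ) (hj0 : j0 < i) (hi : 1 ≤ i) (x y : Fin i → Fin n) :
    bwd i n j0 (by omega) hi (fwd i n j0 hj0 x y).1 (fwd i n j0 hj0 x y).2 = (x, y) := by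
  unfold fwd bwd
  simp only [Prod.mk.injEq]
  constructor
  · funext u
    by_cases h : (u : ℕ) ≤ j0
    · rw [dif_pos h, dif_pos (by simpa using h)] <;> exact congrArg _ (Fin.ext (by simp only [Fin.val_mk]; omega))
    · rw [dif_neg h, dif_neg (by omega)] <;> exact congrArg _ (Fin.ext (by simp only [Fin.val_mk]; omega))
  · funext u
    by_cases h : (u : ℕ) < j0
    · rw [dif_pos h, dif_pos (by simpa using h)] <;> exact congrArg _ (Fin.ext (by simp only [Fin.val_mk]; omega))
    · rw [dif_neg h, dif_neg (by omega)] <;> exact congrArg _ (Fin.ext (by simp only [Fin.val_mk]; omega))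

lemma fwd_bwd (i n j1 : ℕ) (hj1 : j1 ≤ i - 1) (hi : 1 ≤ i) (c : Fin (i+1) → Fin n)
    (d : Fin (i-1) → Fin n) :
    fwd i n j1 (by omega) (bwd i n j1 hj1 hi c d).1 (bwd i n j1 hj1 hi c d).2 = (c, d) := by
  unfold fwd bwd
  simp only [Prod.mk.injEq]
  constructor
  · funext u
    by_cases h : (u : ℕ) ≤ j1
    · rw [dif_pos h, dif_pos (by simpa using h)] <;> exact congrArg _ (Fin.ext (by simp only [Fin.val_mk]; omega))
    · rw [dif_neg h, dif_neg (by omega)] <;> exact congrArg _ (Fin.ext (by simp only [Fin.val_mk]; omega))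
  · funext u
    by_cases h : (u : ℕ) < j1
    · rw [dif_pos h, dif_pos (by simpa using h)] <;> exact congrArg _ (Fin.ext (by simp only [Fin.val_mk]; omega))
    · rw [dif_neg h, dif_neg (by omega)] <;> exact congrArg _ (Fin.ext (by simp only [Fin.val_mk]; omega))



lemma fwd_mem (i n j0 : ℕ) (hj0 : j0 < i) (x y : Fin i → Fin n)
    (hx : StrictAnti x) (hy : StrictAnti y)
    (hbad : y ⟨j0, hj0⟩ < x ⟨j0, hj0⟩)
    (hmin : ∀ t (ht : t < j0), x ⟨t, by omega⟩ ≤ y ⟨t, by omega⟩) :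
    StrictAnti (fwd i n j0 hj0 x y).1 ∧ StrictAnti (fwd i n j0 hj0 x y).2 := by
  unfold fwd
  constructor
  · intro a b hab
    have hab' : (a : ℕ) < b := hab
    simp only
    by_cases hb : (b : ℕ) ≤ j0
    · rw [dif_pos hb, dif_pos (by omega)]
      exact hx (Fin.mk_lt_mk.2 hab')
    · by_cases ha : (a : ℕ) ≤ j0
      · rw [dif_neg hb, dif_pos ha]
        have h2 : y ⟨(b : ℕ) - 1, by have := b.isLt; omega⟩ ≤ y ⟨j0, hj0⟩ :=
          hy.antitone (Fin.mk_le_mk.2 (by omega))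
        exact lt_of_le_of_lt h2 (lt_of_lt_of_le hbad (hx.antitone (Fin.mk_le_mk.2 ha)))
      · rw [dif_neg hb, dif_neg ha]
        exact hy (Fin.mk_lt_mk.2 (by omega))
  · intro a b hab
    have hab' : (a : ℕ) < b := hab
    simp only
    by_cases hb : (b : ℕ) < j0
    · rw [dif_pos hb, dif_pos (by omega)]
      exact hy (Fin.mk_lt_mk.2 hab')
    · by_cases ha : (a : ℕ) < j0
      · rw [dif_neg hb, dif_pos ha]
        exact lt_of_lt_of_le (hx (Fin.mk_lt_mk.2 (by omega))) (hmin a ha)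
      · rw [dif_neg hb, dif_neg ha]
        exact hx (Fin.mk_lt_mk.2 (by omega))

lemma bwd_mem (i n j1 : ℕ) (hj1 : j1 ≤ i - 1) (hi : 1 ≤ i) (c : Fin (i+1) → Fin n)
    (d : Fin (i-1) → Fin n) (hc : StrictAnti c) (hd : StrictAnti d)
    (hbad : ∀ (h : j1 < i - 1), d ⟨j1, h⟩ < c ⟨j1, by omega⟩)
    (hmin : ∀ t (ht : t < j1), c ⟨t, by omega⟩ ≤ d ⟨t, by omega⟩) :
    StrictAnti (bwd i n j1 hj1 hi c d).1 ∧ StrictAnti (bwd i n j1 hj1 hi c d).2 ∧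
      (bwd i n j1 hj1 hi c d).2 ⟨j1, by omega⟩ < (bwd i n j1 hj1 hi c d).1 ⟨j1, by omega⟩ ∧
      ∀ t (ht : t < j1), (bwd i n j1 hj1 hi c d).1 ⟨t, by omega⟩ ≤
        (bwd i n j1 hj1 hi c d).2 ⟨t, by omega⟩ := by
  unfold bwd
  refine ⟨?_, ?_, ?_, ?_⟩
  · intro a b hab
    have hab' : (a : ℕ) < b := hab
    have hbi := b.isLt
    simp only
    by_cases hb : (b : ℕ) ≤ j1
    · rw [dif_pos hb, dif_pos (by omega)]
      exact hc (Fin.mk_lt_mk.2 hab')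
    · by_cases ha : (a : ℕ) ≤ j1
      · rw [dif_neg hb, dif_pos ha]
        have h1 : j1 < i - 1 := by omega
        have h2 : d ⟨(b : ℕ) - 1, by omega⟩ ≤ d ⟨j1, h1⟩ :=
          hd.antitone (Fin.mk_le_mk.2 (by omega))
        exact lt_of_le_of_lt h2 (lt_of_lt_of_le (hbad h1) (hc.antitone (Fin.mk_le_mk.2 ha)))
      · rw [dif_neg hb, dif_neg ha]
        exact hd (Fin.mk_lt_mk.2 (by omega))
  · intro a b hab
    have hab' : (a : ℕ) < b := hab
    have hbi := b.isLt
    simp only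
    by_cases hb : (b : ℕ) < j1
    · rw [dif_pos hb, dif_pos (by omega)]
      exact hd (Fin.mk_lt_mk.2 hab')
    · by_cases ha : (a : ℕ) < j1
      · rw [dif_neg hb, dif_pos ha]
        exact lt_of_lt_of_le (hc (Fin.mk_lt_mk.2 (by omega))) (hmin a ha)
      · rw [dif_neg hb, dif_neg ha]
        exact hc (Fin.mk_lt_mk.2 (by omega))
  · simp only
    rw [dif_neg (by simp : ¬ ((⟨j1, by omega⟩ : Fin i) : ℕ) < j1),
      dif_pos (by simp : ((⟨j1, by omega⟩ : Fin i) : ℕ) ≤ j1)]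
    exact hc (Fin.mk_lt_mk.2 (by omega))
  · intro t ht
    simp only
    rw [dif_pos (by simpa using le_of_lt ht), dif_pos (by simpa using ht)]
    exact hmin t ht



lemma J0_ex (i n : ℕ) (x y : Fin i → Fin n) (hbad : ¬ ∀ j, x j ≤ y j) :
    ∃ j, ∃ h : j < i, y ⟨j, h⟩ < x ⟨j, h⟩ := by
  push_neg at hbad
  obtain ⟨j, hj⟩ := hbad
  exact ⟨(j : ℕ), j.isLt, by simpa using hj⟩

open Classical in
noncomputable def J0 (i n : ℕ) (x y : Fin i → Fin n) (hbad : ¬ ∀ j, x j ≤ y j) : ℕ :=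
  Nat.find (J0_ex i n x y hbad)

open Classical in
lemma J0_lt (i n : ℕ) (x y : Fin i → Fin n) (hbad : ¬ ∀ j, x j ≤ y j) :
    J0 i n x y hbad < i := by
  obtain ⟨h, -⟩ := Nat.find_spec (J0_ex i n x y hbad)
  exact h

open Classical in
lemma J0_spec (i n : ℕ) (x y : Fin i → Fin n) (hbad : ¬ ∀ j, x j ≤ y j) :
    y ⟨J0 i n x y hbad, J0_lt i n x y hbad⟩ < x ⟨J0 i n x y hbad, J0_lt i n x y hbad⟩ := by
  obtain ⟨h, h2⟩ := Nat.find_spec (J0_ex i n x y hbad)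
  exact h2

open Classical in
lemma J0_min (i n : ℕ) (x y : Fin i → Fin n) (hbad : ¬ ∀ j, x j ≤ y j) :
    ∀ t (ht : t < J0 i n x y hbad), x ⟨t, by have := J0_lt i n x y hbad; omega⟩ ≤
      y ⟨t, by have := J0_lt i n x y hbad; omega⟩ := by
  intro t ht
  have := Nat.find_min (J0_ex i n x y hbad) ht
  push_neg at this
  exact this (by have := J0_lt i n x y hbad; omega)

lemma J1_ex (i n : ℕ) (c : Fin (i+1) → Fin n) (d : Fin (i-1) → Fin n) :
    ∃ j, i - 1 ≤ j ∨ ∃ h : j < i - 1, d ⟨j, h⟩ < c ⟨j, by omega⟩ :=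
  ⟨i - 1, Or.inl le_rfl⟩

open Classical in
noncomputable def J1 (i n : ℕ) (c : Fin (i+1) → Fin n) (d : Fin (i-1) → Fin n) : ℕ :=
  Nat.find (J1_ex i n c d)

open Classical in
lemma J1_le (i n : ℕ) (c : Fin (i+1) → Fin n) (d : Fin (i-1) → Fin n) :
    J1 i n c d ≤ i - 1 :=
  Nat.find_le (Or.inl le_rfl)

open Classical in
lemma J1_spec (i n : ℕ) (c : Fin (i+1) → Fin n) (d : Fin (i-1) → Fin n) :
    ∀ h : J1 i n c d < i - 1, d ⟨J1 i n c d, h⟩ < c ⟨J1 i n c d, by omega⟩ := by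
  intro h
  unfold J1 at h ⊢
  rcases Nat.find_spec (J1_ex i n c d) with h1 | ⟨h2, h3⟩
  · omega
  · exact h3

open Classical in
lemma J1_min (i n : ℕ) (c : Fin (i+1) → Fin n) (d : Fin (i-1) → Fin n) :
    ∀ t (ht : t < J1 i n c d), c ⟨t, by have := J1_le i n c d; omega⟩ ≤
      d ⟨t, by have := J1_le i n c d; omega⟩ := by
  intro t ht
  have hle := J1_le i n c d
  have := Nat.find_min (J1_ex i n c d) ht
  push_neg at this
  obtain ⟨h1, h2⟩ := this
  exact h2 (by omega)

lemma fwd_congr (i n j j' : ℕ) (h : j < i) (h' : j' < i) (x y : Fin i → Fin n)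
    (e : j = j') : fwd i n j h x y = fwd i n j' h' x y := by subst e; rfl

lemma bwd_congr (i n j j' : ℕ) (h : j ≤ i - 1) (h' : j' ≤ i - 1) (hi : 1 ≤ i)
    (c : Fin (i+1) → Fin n) (d : Fin (i-1) → Fin n)
    (e : j = j') : bwd i n j h hi c d = bwd i n j' h' hi c d := by subst e; rfl

open Classical in
lemma J1_fwd (i n : ℕ) (x y : Fin i → Fin n) (hbad : ¬ ∀ j, x j ≤ y j)
    (hx : StrictAnti x) :
    J1 i n (fwd i n (J0 i n x y hbad) (J0_lt i n x y hbad) x y).1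
      (fwd i n (J0 i n x y hbad) (J0_lt i n x y hbad) x y).2 = J0 i n x y hbad := by
  have hJ0 := J0_lt i n x y hbad
  unfold J1
  rw [Nat.find_eq_iff]
  constructor
  · by_cases hlt : J0 i n x y hbad < i - 1
    · refine Or.inr ⟨hlt, ?_⟩
      unfold fwd
      simp only
      rw [dif_neg (by simp), dif_pos (by simp)]
      exact hx (Fin.mk_lt_mk.2 (by omega))
    · exact Or.inl (by omega)
  · intro m hm
    rintro (h | ⟨h, hdc⟩)
    · omega
    · unfold fwd at hdc
      simp only at hdc
      rw [dif_pos (by simpa using hm), dif_pos (by omega)] at hdc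
      have := J0_min i n x y hbad m hm
      exact absurd hdc (not_lt.2 this)

open Classical in
lemma J0_bwd (i n : ℕ) (hi : 1 ≤ i) (c : Fin (i+1) → Fin n) (d : Fin (i-1) → Fin n)
    (hc : StrictAnti c)
    (hbad : ¬ ∀ j, (bwd i n (J1 i n c d) (J1_le i n c d) hi c d).1 j ≤
      (bwd i n (J1 i n c d) (J1_le i n c d) hi c d).2 j) :
    J0 i n (bwd i n (J1 i n c d) (J1_le i n c d) hi c d).1
      (bwd i n (J1 i n c d) (J1_le i n c d) hi c d).2 hbad = J1 i n c d := by
  have hJ1 := J1_le i n c d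
  unfold J0
  rw [Nat.find_eq_iff]
  constructor
  · refine ⟨by omega, ?_⟩
    unfold bwd
    simp only
    rw [dif_neg (by simp), dif_pos (by simp)]
    exact hc (Fin.mk_lt_mk.2 (by omega))
  · intro m hm
    rintro ⟨hmi, hlt⟩
    unfold bwd at hlt
    simp only at hlt
    rw [dif_pos (by simpa using hm), dif_pos (by omega)] at hlt
    have := J1_min i n c d m hm
    exact absurd hlt (not_lt.2 this)

open Classical in
lemma card_bad (i n : ℕ) (hi : 1 ≤ i) :
    Fintype.card {z : (Fin i → Fin n) × (Fin i → Fin n) //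
        StrictAnti z.1 ∧ StrictAnti z.2 ∧ ¬ ∀ j, z.1 j ≤ z.2 j} =
      n.choose (i+1) * n.choose (i-1) := by
  have e : {z : (Fin i → Fin n) × (Fin i → Fin n) //
        StrictAnti z.1 ∧ StrictAnti z.2 ∧ ¬ ∀ j, z.1 j ≤ z.2 j} ≃
      {z : (Fin (i+1) → Fin n) × (Fin (i-1) → Fin n) // StrictAnti z.1 ∧ StrictAnti z.2} :=
    { toFun := fun z =>
        ⟨fwd i n (J0 i n z.1.1 z.1.2 z.2.2.2) (J0_lt i n z.1.1 z.1.2 z.2.2.2) z.1.1 z.1.2,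
          fwd_mem i n _ _ z.1.1 z.1.2 z.2.1 z.2.2.1
            (J0_spec i n z.1.1 z.1.2 z.2.2.2) (J0_min i n z.1.1 z.1.2 z.2.2.2)⟩
      invFun := fun z =>
        ⟨bwd i n (J1 i n z.1.1 z.1.2) (J1_le i n z.1.1 z.1.2) hi z.1.1 z.1.2, by
          obtain ⟨h1, h2, h3, _⟩ := bwd_mem i n (J1 i n z.1.1 z.1.2) (J1_le i n z.1.1 z.1.2)
            hi z.1.1 z.1.2 z.2.1 z.2.2 (J1_spec i n z.1.1 z.1.2) (J1_min i n z.1.1 z.1.2)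
          exact ⟨h1, h2, fun hall => absurd (hall _) (not_le.2 h3)⟩⟩
      left_inv := fun z => by
        apply Subtype.ext
        dsimp only
        rw [bwd_congr i n _ _ (J1_le _ _ _ _)
          (by have := J0_lt i n z.1.1 z.1.2 z.2.2.2; omega) hi _ _
          (J1_fwd i n z.1.1 z.1.2 z.2.2.2 z.2.1)]
        exact bwd_fwd i n _ (J0_lt i n z.1.1 z.1.2 z.2.2.2) hi z.1.1 z.1.2
      right_inv := fun z => by
        apply Subtype.ext
        dsimp only
        rw [fwd_congr i n _ _ (J0_lt _ _ _ _ _)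
          (by have := J1_le i n z.1.1 z.1.2; omega) _ _
          (J0_bwd i n hi z.1.1 z.1.2 z.2.1 _)]
        exact fwd_bwd i n _ (J1_le i n z.1.1 z.1.2) hi z.1.1 z.1.2 }
  rw [Fintype.card_congr e, Fintype.card_congr (Equiv.subtypeProdEquivProd),
    Fintype.card_prod, card_strictAnti, card_strictAnti]

open Classical in
lemma card_good (i n : ℕ) (hi : 1 ≤ i) :
    Fintype.card {z : (Fin i → Fin n) × (Fin i → Fin n) //
        StrictAnti z.1 ∧ StrictAnti z.2 ∧ ∀ j, z.1 j ≤ z.2 j}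
      + n.choose (i+1) * n.choose (i-1) = n.choose i * n.choose i := by
  rw [← card_bad i n hi]
  have e1 : {z : (Fin i → Fin n) × (Fin i → Fin n) //
      StrictAnti z.1 ∧ StrictAnti z.2 ∧ ∀ j, z.1 j ≤ z.2 j} ≃
      {w : {z : (Fin i → Fin n) × (Fin i → Fin n) // StrictAnti z.1 ∧ StrictAnti z.2} //
        ∀ j, w.1.1 j ≤ w.1.2 j} :=
    ((Equiv.subtypeSubtypeEquivSubtypeInter
        (fun z : (Fin i → Fin n) × (Fin i → Fin n) => StrictAnti z.1 ∧ StrictAnti z.2)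
        (fun z => ∀ j, z.1 j ≤ z.2 j)).trans
      (Equiv.subtypeEquivRight (fun z => by tauto))).symm
  have e2 : {z : (Fin i → Fin n) × (Fin i → Fin n) //
      StrictAnti z.1 ∧ StrictAnti z.2 ∧ ¬ ∀ j, z.1 j ≤ z.2 j} ≃
      {w : {z : (Fin i → Fin n) × (Fin i → Fin n) // StrictAnti z.1 ∧ StrictAnti z.2} //
        ¬ ∀ j, w.1.1 j ≤ w.1.2 j} :=
    ((Equiv.subtypeSubtypeEquivSubtypeInter
        (fun z : (Fin i → Fin n) × (Fin i → Fin n) => StrictAnti z.1 ∧ StrictAnti z.2)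
        (fun z => ¬ ∀ j, z.1 j ≤ z.2 j)).trans
      (Equiv.subtypeEquivRight (fun z => by tauto))).symm
  rw [Fintype.card_congr e1, Fintype.card_congr e2, Fintype.card_subtype_compl,
    Fintype.card_congr (Equiv.subtypeProdEquivProd), Fintype.card_prod,
    card_strictAnti]
  have hle := Fintype.card_subtype_le
    (fun w : {z : (Fin i → Fin n) × (Fin i → Fin n) // StrictAnti z.1 ∧ StrictAnti z.2} =>
      ∀ j, w.1.1 j ≤ w.1.2 j)
  rw [Fintype.card_congr (Equiv.subtypeProdEquivProd), Fintype.card_prod,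
    card_strictAnti] at hle
  omega

lemma strictAnti_val_add_le {i n : ℕ} {x : Fin i → Fin n} (hx : StrictAnti x)
    {a b : Fin i} (hab : a ≤ b) : (x b : ℕ) + (b : ℕ) ≤ (x a : ℕ) + (a : ℕ) := by
  have h : (a : ℕ) + ((b : ℕ) - (a : ℕ)) < i := by have := b.isLt; omega
  have h2 := strictAnti_gap hx ((b : ℕ) - (a : ℕ)) (a : ℕ) h
  have hb : x ⟨(a : ℕ) + ((b : ℕ) - (a : ℕ)), h⟩ = x b :=
    congrArg x (Fin.ext (by simp only [Fin.val_mk]; have : (a : ℕ) ≤ b := hab; omega))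
  have ha : x ⟨(a : ℕ), by omega⟩ = x a := congrArg x (Fin.ext rfl)
  rw [hb, ha] at h2
  have : (a : ℕ) ≤ b := hab
  omega

lemma card_shift (i m : ℕ) (hi : 1 ≤ i) :
    Fintype.card {z : (Fin i → Fin (m+3)) × (Fin i → Fin (m+3)) //
        Antitone z.1 ∧ Antitone z.2 ∧ ∀ j, z.1 j < z.2 j} =
      Fintype.card {z : (Fin i → Fin (i+m+1)) × (Fin i → Fin (i+m+1)) //
        StrictAnti z.1 ∧ StrictAnti z.2 ∧ ∀ j, z.1 j ≤ z.2 j} := by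
  apply Fintype.card_congr
  refine
    { toFun := fun z =>
        ⟨(fun j => ⟨(z.1.1 j : ℕ) + (i - 1 - (j : ℕ)), by
            have h1 := z.2.2.2 j
            have h1' : (z.1.1 j : ℕ) < (z.1.2 j : ℕ) := h1
            have h2 := (z.1.2 j).isLt
            have h3 := j.isLt
            omega⟩,
          fun j => ⟨(z.1.2 j : ℕ) - 1 + (i - 1 - (j : ℕ)), by
            have h2 := (z.1.2 j).isLt
            have h3 := j.isLt
            omega⟩), ?_, ?_, ?_⟩
      invFun := fun z =>
        ⟨(fun j => ⟨(z.1.1 j : ℕ) - (i - 1 - (j : ℕ)), by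
            have h1 := strictAnti_add_lt z.2.1 j
            omega⟩,
          fun j => ⟨(z.1.2 j : ℕ) - (i - 1 - (j : ℕ)) + 1, by
            have h1 := strictAnti_add_lt z.2.2.1 j
            have h3 := j.isLt
            omega⟩), ?_, ?_, ?_⟩
      left_inv := fun z => ?_
      right_inv := fun z => ?_ }
  · intro a b hab
    have hab' : (a : ℕ) < b := hab
    have h1 : z.1.1 b ≤ z.1.1 a := z.2.1 hab.le
    have h1' : (z.1.1 b : ℕ) ≤ (z.1.1 a : ℕ) := h1
    have hb := b.isLt
    exact Fin.mk_lt_mk.2 (by omega)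
  · intro a b hab
    have hab' : (a : ℕ) < b := hab
    have h1 : z.1.2 b ≤ z.1.2 a := z.2.2.1 hab.le
    have h1' : (z.1.2 b : ℕ) ≤ (z.1.2 a : ℕ) := h1
    have h2 := z.2.2.2 b
    have h2' : (z.1.1 b : ℕ) < (z.1.2 b : ℕ) := h2
    have hb := b.isLt
    exact Fin.mk_lt_mk.2 (by omega)
  · intro j
    have h1 := z.2.2.2 j
    have h1' : (z.1.1 j : ℕ) < (z.1.2 j : ℕ) := h1
    exact Fin.mk_le_mk.2 (by omega)
  · intro a b hab
    have hab' : (a : ℕ) ≤ b := hab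
    have h1 := strictAnti_val_add_le z.2.1 hab
    have h2 := strictAnti_le_apply z.2.1 b
    have hb := b.isLt
    exact Fin.mk_le_mk.2 (by omega)
  · intro a b hab
    have hab' : (a : ℕ) ≤ b := hab
    have h1 := strictAnti_val_add_le z.2.2.1 hab
    have h2 := strictAnti_le_apply z.2.2.1 b
    have hb := b.isLt
    exact Fin.mk_le_mk.2 (by omega)
  · intro j
    have h1 := z.2.2.2 j
    have h1' : (z.1.1 j : ℕ) ≤ (z.1.2 j : ℕ) := h1
    have h2 := strictAnti_le_apply z.2.1 j
    exact Fin.mk_lt_mk.2 (by omega)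
  · apply Subtype.ext
    dsimp only
    apply Prod.ext
    · funext j
      apply Fin.ext
      simp only [Fin.val_mk]
      omega
    · funext j
      apply Fin.ext
      simp only [Fin.val_mk]
      have h1 := z.2.2.2 j
      have h1' : (z.1.2 j : ℕ) > 0 := by
        have : (z.1.1 j : ℕ) < (z.1.2 j : ℕ) := h1
        omega
      omega
  · apply Subtype.ext
    dsimp only
    apply Prod.ext
    · funext j
      apply Fin.ext
      simp only [Fin.val_mk]
      have h2 := strictAnti_le_apply z.2.1 j
      omega
    · funext j
      apply Fin.ext
      simp only [Fin.val_mk]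
      have h2 := strictAnti_le_apply z.2.2.1 j
      omega

/-- `w` avoids the classical pattern 123. -/
def Avoids123 {l k : ℕ} (w : Fin l → Fin k) : Prop :=
  ¬ ∃ j₁ j₂ j₃ : Fin l, j₁ < j₂ ∧ j₂ < j₃ ∧ w j₁ < w j₂ ∧ w j₂ < w j₃

lemma pairs_of_words {i k : ℕ} (w : Fin (2*i) → Fin k) (hud : IsUpDown w)
    (hav : Avoids123 w) :
    Antitone (fun j : Fin i => w ⟨2*(j:ℕ), by have := j.isLt; omega⟩) ∧
    Antitone (fun j : Fin i => w ⟨2*(j:ℕ)+1, by have := j.isLt; omega⟩) ∧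
    ∀ j : Fin i, w ⟨2*(j:ℕ), by have := j.isLt; omega⟩ <
      w ⟨2*(j:ℕ)+1, by have := j.isLt; omega⟩ := by
  have hvp : ∀ j : Fin i, w ⟨2*(j:ℕ), by have := j.isLt; omega⟩ <
      w ⟨2*(j:ℕ)+1, by have := j.isLt; omega⟩ := by
    intro j
    have hj := j.isLt
    exact (hud (2*(j:ℕ)) (by omega)).1 (by omega)
  refine ⟨?_, ?_, hvp⟩
  · intro a b hab
    have hab' : (a : ℕ) ≤ b := hab
    rcases eq_or_lt_of_le hab' with heq | hlt
    · exact le_of_eq (congrArg w (Fin.ext (by simp [heq])))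
    · by_contra hc
      push_neg at hc
      have hb := b.isLt
      exact hav ⟨⟨2*(a:ℕ), by omega⟩, ⟨2*(b:ℕ), by omega⟩, ⟨2*(b:ℕ)+1, by omega⟩,
        Fin.mk_lt_mk.2 (by omega), Fin.mk_lt_mk.2 (by omega), hc, hvp b⟩
  · intro a b hab
    have hab' : (a : ℕ) ≤ b := hab
    rcases eq_or_lt_of_le hab' with heq | hlt
    · exact le_of_eq (congrArg w (Fin.ext (by simp [heq])))
    · by_contra hc
      push_neg at hc
      have hb := b.isLt
      exact hav ⟨⟨2*(a:ℕ), by omega⟩, ⟨2*(a:ℕ)+1, by omega⟩, ⟨2*(b:ℕ)+1, by omega⟩,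
        Fin.mk_lt_mk.2 (by omega), Fin.mk_lt_mk.2 (by omega), hvp a, hc⟩

set_option maxHeartbeats 2000000 in
lemma words_of_pairs {i k : ℕ} (v p : Fin i → Fin k) (hv : Antitone v) (hp : Antitone p)
    (hvp : ∀ j, v j < p j) :
    IsUpDown (fun r : Fin (2*i) => if (r:ℕ) % 2 = 0
      then v ⟨(r:ℕ)/2, by have := r.isLt; omega⟩
      else p ⟨(r:ℕ)/2, by have := r.isLt; omega⟩) ∧
    Avoids123 (fun r : Fin (2*i) => if (r:ℕ) % 2 = 0
      then v ⟨(r:ℕ)/2, by have := r.isLt; omega⟩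
      else p ⟨(r:ℕ)/2, by have := r.isLt; omega⟩) := by
  constructor
  · intro j h
    constructor
    · intro hj
      simp only
      rw [if_pos (by simpa using hj), if_neg (by omega)]
      have he : p ⟨(j+1)/2, by omega⟩ = p ⟨j/2, by omega⟩ :=
        congrArg p (Fin.ext (by simp only [Fin.val_mk]; omega))
      rw [he]
      exact hvp ⟨j/2, by omega⟩
    · intro hj
      simp only
      rw [if_pos (by omega), if_neg (by simpa using hj)]
      have hle : v ⟨(j+1)/2, by omega⟩ ≤ v ⟨j/2, by omega⟩ :=
        hv (Fin.mk_le_mk.2 (by omega))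
      exact lt_of_le_of_lt hle (hvp ⟨j/2, by omega⟩)
  · rintro ⟨j1, j2, j3, h12, h23, hw1, hw2⟩
    have key : ∀ r s : Fin (2*i), r < s →
        (if (r:ℕ) % 2 = 0 then v ⟨(r:ℕ)/2, by have := r.isLt; omega⟩
          else p ⟨(r:ℕ)/2, by have := r.isLt; omega⟩) <
        (if (s:ℕ) % 2 = 0 then v ⟨(s:ℕ)/2, by have := s.isLt; omega⟩
          else p ⟨(s:ℕ)/2, by have := s.isLt; omega⟩) →
        (r:ℕ) % 2 = 0 ∧ (s:ℕ) % 2 = 1 := by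
      intro r s hrs hlt
      have hrs' : (r:ℕ) < s := hrs
      by_cases hr : (r:ℕ) % 2 = 0 <;> by_cases hs : (s:ℕ) % 2 = 0
      · rw [if_pos hr, if_pos hs] at hlt
        have : v ⟨(s:ℕ)/2, by have := s.isLt; omega⟩ ≤ v ⟨(r:ℕ)/2, by have := r.isLt; omega⟩ :=
          hv (Fin.mk_le_mk.2 (by omega))
        exact absurd hlt (not_lt.2 this)
      · exact ⟨hr, by omega⟩
      · rw [if_neg hr, if_pos hs] at hlt
        have h1 : v ⟨(s:ℕ)/2, by have := s.isLt; omega⟩ ≤ v ⟨(r:ℕ)/2, by have := r.isLt; omega⟩ :=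
          hv (Fin.mk_le_mk.2 (by omega))
        have h2 := hvp ⟨(r:ℕ)/2, by have := r.isLt; omega⟩
        exact absurd hlt (not_lt.2 (le_of_lt (lt_of_le_of_lt h1 h2)))
      · rw [if_neg hr, if_neg hs] at hlt
        have : p ⟨(s:ℕ)/2, by have := s.isLt; omega⟩ ≤ p ⟨(r:ℕ)/2, by have := r.isLt; omega⟩ :=
          hp (Fin.mk_le_mk.2 (by omega))
        exact absurd hlt (not_lt.2 this)
    have k1 := key j1 j2 h12 hw1
    have k2 := key j2 j3 h23 hw2
    omega

open Classical in
lemma card_words (i k : ℕ) :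
    Fintype.card {w : Fin (2*i) → Fin k // IsUpDown w ∧ Avoids123 w} =
      Fintype.card {z : (Fin i → Fin k) × (Fin i → Fin k) //
        Antitone z.1 ∧ Antitone z.2 ∧ ∀ j, z.1 j < z.2 j} := by
  apply Fintype.card_congr
  refine
    { toFun := fun w =>
        ⟨(fun j => w.1 ⟨2*(j:ℕ), by have := j.isLt; omega⟩,
          fun j => w.1 ⟨2*(j:ℕ)+1, by have := j.isLt; omega⟩),
          pairs_of_words w.1 w.2.1 w.2.2⟩
      invFun := fun z =>
        ⟨fun r => if (r:ℕ) % 2 = 0 then z.1.1 ⟨(r:ℕ)/2, by have := r.isLt; omega⟩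
          else z.1.2 ⟨(r:ℕ)/2, by have := r.isLt; omega⟩,
          words_of_pairs z.1.1 z.1.2 z.2.1 z.2.2.1 z.2.2.2⟩
      left_inv := fun w => ?_
      right_inv := fun z => ?_ }
  · apply Subtype.ext
    funext r
    dsimp only
    by_cases hr : (r:ℕ) % 2 = 0
    · rw [if_pos hr]
      exact congrArg w.1 (Fin.ext (by simp only [Fin.val_mk]; omega))
    · rw [if_neg hr]
      exact congrArg w.1 (Fin.ext (by simp only [Fin.val_mk]; omega))
  · apply Subtype.ext
    dsimp only
    apply Prod.ext
    · funext j
      dsimp only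
      rw [if_pos (by omega)]
      exact congrArg z.1.1 (Fin.ext (by simp only [Fin.val_mk]; omega))
    · funext j
      dsimp only
      rw [if_neg (by omega)]
      exact congrArg z.1.2 (Fin.ext (by simp only [Fin.val_mk]; omega))

lemma qid2 (t m : ℕ) :
    ((t+1+m+1).choose (t+1) : ℚ) * ((t+1+m+1).choose (t+1)) -
      ((t+1+m+1).choose (t+1+1)) * ((t+1+m+1).choose (t+1-1)) =
    (1/((t+1 : ℕ)+1)) * ((t+1+(m+3)-2).choose (t+1)) * ((t+1+(m+3)-1).choose (t+1)) := by
  rw [show t+1+m+1 = t+m+2 from by omega, show t+1+1 = t+2 from by omega,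
    show t+1-1 = t from by omega, show t+1+(m+3)-2 = t+m+2 from by omega,
    show t+1+(m+3)-1 = t+m+3 from by omega]
  have h1 : t+1 ≤ t+m+2 := by omega
  have h2 : t+2 ≤ t+m+2 := by omega
  have h3 : t ≤ t+m+2 := by omega
  have h4 : t+1 ≤ t+m+3 := by omega
  rw [Nat.cast_choose ℚ h1, Nat.cast_choose ℚ h2, Nat.cast_choose ℚ h3, Nat.cast_choose ℚ h4,
    show t+m+2 - (t+1) = m+1 from by omega, show t+m+2 - (t+2) = m from by omega,
    show t+m+2 - t = m+2 from by omega, show t+m+3 - (t+1) = m+2 from by omega,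
    show t+m+3 = (t+m+2)+1 from by omega]
  rw [Nat.factorial_succ (t+m+2), Nat.factorial_succ (t+1), Nat.factorial_succ t,
    Nat.factorial_succ (m+1), Nat.factorial_succ m]
  have ht : (t.factorial : ℚ) ≠ 0 := by positivity
  have hm : (m.factorial : ℚ) ≠ 0 := by positivity
  have hn : ((t+m+2).factorial : ℚ) ≠ 0 := by positivity
  push_cast
  field_simp
  ring

/-- For `k ≥ 3`, `i ≥ 1`, the number of 123-avoiding up-down words of length
`2i` over `{1,…,k}` is the Narayana number
`(1/(i+1))·C(i+k−2, i)·C(i+k−1, i)`. -/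
theorem stmt_19 (k i : ℕ) (hk : 3 ≤ k) (hi : 1 ≤ i) :
    ({w : Fin (2 * i) → Fin k | IsUpDown w ∧ Avoids123 w}.ncard : ℚ) =
      (1 / (i + 1)) * Nat.choose (i + k - 2) i * Nat.choose (i + k - 1) i := by
  classical
  obtain ⟨m, rfl⟩ : ∃ m, k = m + 3 := ⟨k - 3, by omega⟩
  obtain ⟨t, rfl⟩ : ∃ t, i = t + 1 := ⟨i - 1, by omega⟩
  have h1 : ({w : Fin (2 * (t+1)) → Fin (m+3) | IsUpDown w ∧ Avoids123 w}.ncard)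
      = Fintype.card {w : Fin (2 * (t+1)) → Fin (m+3) // IsUpDown w ∧ Avoids123 w} := by
    rw [Set.ncard_eq_toFinset_card', Set.toFinset_card]
    exact Fintype.card_congr (Equiv.refl _)
  rw [h1, card_words (t+1) (m+3), card_shift (t+1) m (by omega)]
  have hg := card_good (t+1) (t+1+m+1) (by omega)
  have hg' : ((Fintype.card {z : (Fin (t+1) → Fin (t+1+m+1)) × (Fin (t+1) → Fin (t+1+m+1)) //
      StrictAnti z.1 ∧ StrictAnti z.2 ∧ ∀ j, z.1 j ≤ z.2 j} : ℕ) : ℚ)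
      + ((t+1+m+1).choose (t+1+1) : ℚ) * ((t+1+m+1).choose (t+1-1))
      = ((t+1+m+1).choose (t+1) : ℚ) * ((t+1+m+1).choose (t+1)) := by
    exact_mod_cast congrArg (fun x : ℕ => (x : ℚ)) hg
  have := qid2 t m
  push_cast at this hg' ⊢
  linarith
end
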